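/- arXiv:1905.09596 — 3 statements merged into one kernel-verified Lean document; each statement's English description precedes it below -/
import Mathlib

section
/- Let r be a real number with 1 < r < 2 and let p ∈ ℝ. Define H : ℝ → ℝ by H(x) = max(e^{x+p} − 1, 0) · e^{−rx}. Then H ∈ L¹(ℝ); for every y ∈ ℝ its Fourier transform satisfies Ĥ(y) = e^{−p(iy − r)} / ((iy − r + 1)(iy − r)); the modulus satisfies |Ĥ(y)| = e^{rp} · (((1 − r)² + y²)(r² + y²))^{−1/2}; and Ĥ ∈ L¹(ℝ, ℂ). -/
open MeasureTheory Real Set Filter Topology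

lemma cexp_integrableOn_Ioi (c : ℂ) (hc : c.re < 0) (a : ℝ) :
    IntegrableOn (fun x : ℝ => Complex.exp (c * x)) (Ioi a) := by
  have h : IntegrableOn (fun x : ℝ => Real.exp (-(-c.re) * x)) (Ioi a) :=
    exp_neg_integrableOn_Ioi a (by linarith)
  refine h.integrable.mono ?_ ?_
  · exact (Continuous.cexp (by continuity)).aestronglyMeasurable
  · filter_upwards with x
    simp [Complex.norm_exp, Complex.add_re, Complex.mul_re, abs_of_pos (Real.exp_pos _)]

lemma integral_cexp_Ioi (c : ℂ) (hc : c.re < 0) (a : ℝ) :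
    ∫ x in Ioi a, Complex.exp (c * x) = -Complex.exp (c * a) / c := by
  have hc0 : c ≠ 0 := fun h => by simp [h] at hc
  have hd : ∀ x ∈ Ioi a, HasDerivAt (fun x : ℝ => Complex.exp (c * x) / c)
      (Complex.exp (c * x)) x := by
    intro x _
    have h1 : HasDerivAt (fun w : ℂ => Complex.exp (c * w)) (Complex.exp (c * x) * c) (x : ℂ) := by
      simpa using ((hasDerivAt_id (x : ℂ)).const_mul c).cexp
    have h2 := (h1.comp_ofReal).div_const c
    simpa [mul_div_cancel_right₀ _ hc0] using h2
  have htend : Tendsto (fun x : ℝ => Complex.exp (c * x) / c) atTop (𝓝 0) := by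
    rw [tendsto_zero_iff_norm_tendsto_zero]
    have : (fun x : ℝ => ‖Complex.exp (c * x) / c‖) =
        fun x : ℝ => Real.exp (-(-c.re * x)) / ‖c‖ := by
      funext x
      simp [Complex.norm_exp, Complex.mul_re]
    rw [this]
    have h3 : Tendsto (fun x : ℝ => -c.re * x) atTop atTop :=
      Tendsto.const_mul_atTop (by linarith) tendsto_id
    simpa using ((Real.tendsto_exp_neg_atTop_nhds_zero.comp h3).div_const ‖c‖)
  have := integral_Ioi_of_hasDerivAt_of_tendsto
    ((Continuous.div_const (Continuous.cexp (by continuity)) c).continuousWithinAt)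
    hd (cexp_integrableOn_Ioi c hc a) htend
  rw [this]; ring

/-- For `1 < r < 2` and `p ∈ ℝ`, the function `H(x) = max(e^{x+p} − 1, 0) e^{−rx}` is
in `L¹(ℝ)`, its Fourier transform (convention `Ĥ(y) = ∫ e^{iyx} H(x) dx`) equals
`e^{−p(iy − r)} / ((iy − r + 1)(iy − r))`, the modulus of the latter is
`e^{rp} (((1 − r)² + y²)(r² + y²))^{−1/2}`, and `Ĥ ∈ L¹(ℝ, ℂ)`. -/
theorem fourier_shifted_dampened_call_payoff (r p : ℝ) (hr1 : 1 < r) (hr2 : r < 2) :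
    Integrable (fun x : ℝ => max (Real.exp (x + p) - 1) 0 * Real.exp (-(r * x))) ∧
    (∀ y : ℝ,
      (∫ x : ℝ, Complex.exp (Complex.I * (y : ℂ) * (x : ℂ)) *
          ((max (Real.exp (x + p) - 1) 0 * Real.exp (-(r * x)) : ℝ) : ℂ)) =
        Complex.exp (-((p : ℂ) * (Complex.I * (y : ℂ) - (r : ℂ)))) /
          ((Complex.I * (y : ℂ) - (r : ℂ) + 1) * (Complex.I * (y : ℂ) - (r : ℂ)))) ∧
    (∀ y : ℝ,
      ‖(Complex.exp (-((p : ℂ) * (Complex.I * (y : ℂ) - (r : ℂ)))) /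
            ((Complex.I * (y : ℂ) - (r : ℂ) + 1) * (Complex.I * (y : ℂ) - (r : ℂ))))‖ =
        Real.exp (r * p) * (((1 - r) ^ 2 + y ^ 2) * (r ^ 2 + y ^ 2)) ^ (-(1 / 2 : ℝ))) ∧
    Integrable (fun y : ℝ =>
      Complex.exp (-((p : ℂ) * (Complex.I * (y : ℂ) - (r : ℂ)))) /
        ((Complex.I * (y : ℂ) - (r : ℂ) + 1) * (Complex.I * (y : ℂ) - (r : ℂ)))) := by
  -- rewrite H as an indicator function
  have hH : (fun x : ℝ => max (Real.exp (x + p) - 1) 0 * Real.exp (-(r * x))) =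
      (Ioi (-p)).indicator
        (fun x => Real.exp p * Real.exp ((1 - r) * x) - Real.exp (-(r * x))) := by
    funext x
    by_cases hx : x ∈ Ioi (-p)
    · rw [indicator_of_mem hx]
      have hx' : (0:ℝ) ≤ x + p := by
        simp only [mem_Ioi] at hx; linarith
      rw [max_eq_left (by linarith [Real.one_le_exp hx'])]
      have h1 : Real.exp p * Real.exp ((1 - r) * x) = Real.exp (x + p) * Real.exp (-(r * x)) := by
        rw [← Real.exp_add, ← Real.exp_add]; ring_nf
      rw [sub_mul, one_mul, h1]
    · rw [indicator_of_notMem hx]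
      have hx' : x + p ≤ 0 := by
        simp only [mem_Ioi, not_lt] at hx; linarith
      rw [max_eq_right (by linarith [Real.exp_le_one_iff.mpr hx']), zero_mul]
  have hint1 : IntegrableOn (fun x : ℝ => Real.exp ((1 - r) * x)) (Ioi (-p)) := by
    have := exp_neg_integrableOn_Ioi (-p) (show (0:ℝ) < r - 1 by linarith)
    simpa [neg_sub] using this
  have hint2 : IntegrableOn (fun x : ℝ => Real.exp (-(r * x))) (Ioi (-p)) := by
    have := exp_neg_integrableOn_Ioi (-p) (show (0:ℝ) < r by linarith)
    simpa [neg_mul] using this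
  have part1 : Integrable (fun x : ℝ => max (Real.exp (x + p) - 1) 0 * Real.exp (-(r * x))) := by
    rw [hH, integrable_indicator_iff measurableSet_Ioi]
    exact (hint1.const_mul _).sub hint2
  -- non-vanishing of the denominators
  have hne1 : ∀ y : ℝ, Complex.I * (y:ℂ) - (r:ℂ) + 1 ≠ 0 := by
    intro y h
    have := congrArg Complex.re h
    simp at this
    linarith
  have hne2 : ∀ y : ℝ, Complex.I * (y:ℂ) - (r:ℂ) ≠ 0 := by
    intro y h
    have := congrArg Complex.re h
    simp at this
    linarith
  have hre1 : ∀ y : ℝ, (Complex.I * (y:ℂ) - (r:ℂ) + 1).re = 1 - r := by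
    intro y; simp; ring
  have hre2 : ∀ y : ℝ, (Complex.I * (y:ℂ) - (r:ℂ)).re = -r := by
    intro y; simp
  -- part 2 : the Fourier transform formula
  have part2 : ∀ y : ℝ,
      (∫ x : ℝ, Complex.exp (Complex.I * (y : ℂ) * (x : ℂ)) *
          ((max (Real.exp (x + p) - 1) 0 * Real.exp (-(r * x)) : ℝ) : ℂ)) =
        Complex.exp (-((p : ℂ) * (Complex.I * (y : ℂ) - (r : ℂ)))) /
          ((Complex.I * (y : ℂ) - (r : ℂ) + 1) * (Complex.I * (y : ℂ) - (r : ℂ))) := by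
    intro y
    set c2 : ℂ := Complex.I * (y:ℂ) - (r:ℂ) with hc2def
    have h1 : (c2 + 1).re < 0 := by rw [hre1 y]; linarith
    have h2 : c2.re < 0 := by rw [hre2 y]; linarith
    have key : (fun x : ℝ => Complex.exp (Complex.I * (y : ℂ) * (x : ℂ)) *
          ((max (Real.exp (x + p) - 1) 0 * Real.exp (-(r * x)) : ℝ) : ℂ)) =
        (Ioi (-p)).indicator
          (fun x : ℝ => Complex.exp p * Complex.exp ((c2 + 1) * x) - Complex.exp (c2 * x)) := by
      funext x
      rw [congrFun hH x]
      by_cases hx : x ∈ Ioi (-p)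
      · rw [indicator_of_mem hx, indicator_of_mem hx]
        push_cast
        rw [mul_sub]
        congr 1
        · rw [mul_left_comm]
          congr 1
          rw [← Complex.exp_add]
          congr 1
          rw [hc2def]
          push_cast
          ring
        · rw [← Complex.exp_add]
          congr 1
          rw [hc2def]
          push_cast
          ring
      · rw [indicator_of_notMem hx, indicator_of_notMem hx]
        simp
    rw [key, integral_indicator measurableSet_Ioi,
      integral_sub ((cexp_integrableOn_Ioi _ h1 (-p)).const_mul _)
        (cexp_integrableOn_Ioi _ h2 (-p)),
      MeasureTheory.integral_const_mul, integral_cexp_Ioi _ h1 (-p), integral_cexp_Ioi _ h2 (-p)]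
    have hc10 : c2 + 1 ≠ 0 := hne1 y
    have hc20 : c2 ≠ 0 := hne2 y
    have e1 : Complex.exp (p:ℂ) * Complex.exp ((c2 + 1) * ((-p : ℝ):ℂ)) =
        Complex.exp (-((p:ℂ) * c2)) := by
      rw [← Complex.exp_add]
      congr 1
      push_cast
      ring
    have e2 : Complex.exp (c2 * ((-p : ℝ):ℂ)) = Complex.exp (-((p:ℂ) * c2)) := by
      congr 1
      push_cast
      ring
    rw [neg_div, neg_div, mul_neg, sub_neg_eq_add, ← mul_div_assoc, e1, e2]
    field_simp
    ring
  -- part 3 : the modulus formula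
  have part3 : ∀ y : ℝ,
      ‖(Complex.exp (-((p : ℂ) * (Complex.I * (y : ℂ) - (r : ℂ)))) /
            ((Complex.I * (y : ℂ) - (r : ℂ) + 1) * (Complex.I * (y : ℂ) - (r : ℂ))))‖ =
        Real.exp (r * p) * (((1 - r) ^ 2 + y ^ 2) * (r ^ 2 + y ^ 2)) ^ (-(1 / 2 : ℝ)) := by
    intro y
    have hA : (0:ℝ) < (1 - r) ^ 2 + y ^ 2 := by
      nlinarith [sq_nonneg y, mul_pos (show (0:ℝ) < r - 1 by linarith)
        (show (0:ℝ) < r - 1 by linarith)]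
    have hB : (0:ℝ) < r ^ 2 + y ^ 2 := by
      nlinarith [sq_nonneg y, mul_pos (show (0:ℝ) < r by linarith) (show (0:ℝ) < r by linarith)]
    have habs1 : ‖Complex.I * (y:ℂ) - (r:ℂ) + 1‖ =
        Real.sqrt ((1 - r) ^ 2 + y ^ 2) := by
      rw [Complex.norm_def, Complex.normSq_apply]
      have e1 : (Complex.I * (y:ℂ) - (r:ℂ) + 1).re = 1 - r := hre1 y
      have e2 : (Complex.I * (y:ℂ) - (r:ℂ) + 1).im = y := by simp
      rw [e1, e2]
      congr 1
      ring
    have habs2 : ‖Complex.I * (y:ℂ) - (r:ℂ)‖ = Real.sqrt (r ^ 2 + y ^ 2) := by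
      rw [Complex.norm_def, Complex.normSq_apply]
      have e1 : (Complex.I * (y:ℂ) - (r:ℂ)).re = -r := hre2 y
      have e2 : (Complex.I * (y:ℂ) - (r:ℂ)).im = y := by simp
      rw [e1, e2]
      congr 1
      ring
    have hexp : (-((p:ℂ) * (Complex.I * (y:ℂ) - (r:ℂ)))).re = r * p := by
      simp [Complex.mul_re]
      ring
    rw [norm_div, norm_mul, Complex.norm_exp, hexp, habs1, habs2]
    rw [Real.rpow_neg (by positivity), ← Real.sqrt_eq_rpow,
      Real.sqrt_mul hA.le]
    rw [div_eq_mul_inv]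
  -- part 4 : integrability of the Fourier transform
  have part4 : Integrable (fun y : ℝ =>
      Complex.exp (-((p : ℂ) * (Complex.I * (y : ℂ) - (r : ℂ)))) /
        ((Complex.I * (y : ℂ) - (r : ℂ) + 1) * (Complex.I * (y : ℂ) - (r : ℂ)))) := by
    set c : ℝ := min ((1 - r) ^ 2) 1 with hcdef
    have hcpos : (0:ℝ) < c := by
      apply lt_min _ one_pos
      nlinarith [mul_pos (show (0:ℝ) < r - 1 by linarith) (show (0:ℝ) < r - 1 by linarith)]
    refine Integrable.mono' (integrable_inv_one_add_sq.const_mul (Real.exp (r * p) / Real.sqrt c))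
      ?_ ?_
    · apply Continuous.aestronglyMeasurable
      apply Continuous.div
      · exact Complex.continuous_exp.comp
          ((continuous_const.mul ((continuous_const.mul Complex.continuous_ofReal).sub
            continuous_const)).neg)
      · exact ((continuous_const.mul Complex.continuous_ofReal).sub continuous_const |>.add
          continuous_const).mul ((continuous_const.mul Complex.continuous_ofReal).sub
          continuous_const)
      · intro y
        exact mul_ne_zero (hne1 y) (hne2 y)
    · filter_upwards with y
      rw [part3 y]
      have hA : (0:ℝ) < (1 - r) ^ 2 + y ^ 2 := by
        nlinarith [sq_nonneg y, mul_pos (show (0:ℝ) < r - 1 by linarith)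
          (show (0:ℝ) < r - 1 by linarith)]
      have hB : (0:ℝ) < r ^ 2 + y ^ 2 := by
        nlinarith [sq_nonneg y, mul_pos (show (0:ℝ) < r by linarith) (show (0:ℝ) < r by linarith)]
      have hAB : c * (1 + y ^ 2) ^ 2 ≤ ((1 - r) ^ 2 + y ^ 2) * (r ^ 2 + y ^ 2) := by
        have hc1 : c ≤ (1 - r) ^ 2 := min_le_left _ _
        have hc2 : c ≤ 1 := min_le_right _ _
        have hy1 : (0:ℝ) < 1 + y ^ 2 := by positivity
        have h1 : c * (1 + y ^ 2) ≤ (1 - r) ^ 2 + y ^ 2 := by nlinarith [sq_nonneg y]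
        have h2 : (1 + y ^ 2 : ℝ) ≤ r ^ 2 + y ^ 2 := by nlinarith
        calc c * (1 + y ^ 2) ^ 2 = (c * (1 + y ^ 2)) * (1 + y ^ 2) := by ring
          _ ≤ ((1 - r) ^ 2 + y ^ 2) * (r ^ 2 + y ^ 2) :=
            mul_le_mul h1 h2 hy1.le hA.le
      have hs : Real.sqrt c * (1 + y ^ 2) ≤
          Real.sqrt (((1 - r) ^ 2 + y ^ 2) * (r ^ 2 + y ^ 2)) := by
        have : Real.sqrt c * (1 + y ^ 2) = Real.sqrt (c * (1 + y ^ 2) ^ 2) := by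
          rw [Real.sqrt_mul hcpos.le, Real.sqrt_sq (by positivity)]
        rw [this]
        exact Real.sqrt_le_sqrt hAB
      rw [Real.rpow_neg (by positivity), ← Real.sqrt_eq_rpow]
      have hspos : (0:ℝ) < Real.sqrt c * (1 + y ^ 2) := by positivity
      calc Real.exp (r * p) * (Real.sqrt (((1 - r) ^ 2 + y ^ 2) * (r ^ 2 + y ^ 2)))⁻¹
          ≤ Real.exp (r * p) * (Real.sqrt c * (1 + y ^ 2))⁻¹ :=
            mul_le_mul_of_nonneg_left (inv_anti₀ hspos hs) (Real.exp_nonneg _)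
        _ = Real.exp (r * p) / Real.sqrt c * (1 + y ^ 2)⁻¹ := by
            rw [mul_inv, div_eq_mul_inv]; ring
  exact ⟨part1, part2, part3, part4⟩
end

section
/- Let j ≥ 1 be an integer, β > 0, Δ₂, …, Δ_{j+1} > 0, p ∈ ℝ, and let r be a real number with 1 < r < 2. Define H : ℝ^{j+1} → ℝ by H(x₁, …, x_{j+1}) = (∏_{l=2}^{j+1} exp(−β Δ_l x_{l−1}²)) · max(e^{x_{j+1} + p} − 1, 0) · e^{−r x_{j+1}}. Then H ∈ L¹(ℝ^{j+1}), its Fourier transform is given for every (y₁, …, y_{j+1}) ∈ ℝ^{j+1} by Ĥ(y₁, …, y_{j+1}) = [e^{−p(i y_{j+1} − r)} / ((i y_{j+1} − r + 1)(i y_{j+1} − r))] · ∏_{l=2}^{j+1} √(π / (β Δ_l)) · exp(−y_{l−1}² / (4 β Δ_l)), and Ĥ ∈ L¹(ℝ^{j+1}, ℂ). -/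
open MeasureTheory Real Set Filter Complex


-- complex exponential on Ioi
lemma cexp_mul_intOn (s : ℂ) (hs : s.re < 0) (a : ℝ) :
    IntegrableOn (fun x : ℝ => Complex.exp (s * x)) (Ioi a) := by
  refine Integrable.mono' (exp_neg_integrableOn_Ioi a (neg_pos.mpr hs))
    ?_ (ae_of_all _ fun x => ?_)
  · exact (Complex.continuous_exp.comp (continuous_const.mul Complex.continuous_ofReal)).aestronglyMeasurable
  · simp [Complex.norm_exp, Complex.mul_re, neg_mul]

lemma cexp_tendsto (s : ℂ) (hs : s.re < 0) :
    Tendsto (fun x : ℝ => Complex.exp (s * x)) atTop (nhds 0) := by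
  rw [tendsto_zero_iff_norm_tendsto_zero]
  have h1 : Tendsto (fun x : ℝ => Real.exp (-((-s.re) * x))) atTop (nhds 0) := by
    exact Real.tendsto_exp_neg_atTop_nhds_zero.comp (tendsto_id.const_mul_atTop (neg_pos.mpr hs))
  refine h1.congr fun x => ?_
  simp [Complex.norm_exp, Complex.mul_re, neg_mul]

lemma cexp_hasDerivAt (s : ℂ) (hs : s ≠ 0) (x : ℝ) :
    HasDerivAt (fun y : ℝ => Complex.exp (s * y) / s) (Complex.exp (s * x)) x := by
  rw [← mul_div_cancel_right₀ (Complex.exp (s * x)) hs]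
  apply ((Complex.hasDerivAt_exp _).comp x _).div_const s
  simpa only [mul_one, id] using ((hasDerivAt_id (x : ℂ)).const_mul _).comp_ofReal

lemma cexp_mul_int (s : ℂ) (hs : s.re < 0) (a : ℝ) :
    ∫ x in Ioi a, Complex.exp (s * x) = -Complex.exp (s * a) / s := by
  have hs0 : s ≠ 0 := fun h => by simp [h] at hs
  have := integral_Ioi_of_hasDerivAt_of_tendsto
    (f := fun y : ℝ => Complex.exp (s * y) / s) (f' := fun y : ℝ => Complex.exp (s * y))
    (a := a) (m := 0)
    (cexp_hasDerivAt s hs0 a).continuousAt.continuousWithinAt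
    (fun x _ => cexp_hasDerivAt s hs0 x)
    (cexp_mul_intOn s hs a)
    (by simpa using (cexp_tendsto s hs).div_const s)
  rw [this]; ring

section call
variable (p r : ℝ) (hr1 : 1 < r)

-- the 1D payoff function
noncomputable def gfun (p r : ℝ) (x : ℝ) : ℝ :=
  max (Real.exp (x + p) - 1) 0 * Real.exp (-(r * x))

lemma gfun_nonneg (x : ℝ) : 0 ≤ gfun p r x :=
  mul_nonneg (le_max_right _ _) (Real.exp_nonneg _)

lemma gfun_eq_zero {x : ℝ} (hx : x ≤ -p) : gfun p r x = 0 := by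
  have : Real.exp (x + p) ≤ 1 := by
    rw [← Real.exp_zero]; exact Real.exp_le_exp.mpr (by linarith)
  simp [gfun, max_eq_right (by linarith : Real.exp (x + p) - 1 ≤ 0)]

lemma gfun_cont : Continuous (gfun p r) := by
  unfold gfun
  exact (((Real.continuous_exp.comp (continuous_id.add continuous_const)).sub
    continuous_const).max continuous_const).mul
    (Real.continuous_exp.comp (continuous_const.mul continuous_id).neg)

lemma gfun_integrable (hr1 : 1 < r) : Integrable (gfun p r) := by
  have hint0 : IntegrableOn (fun x : ℝ => Real.exp (-(r-1) * x)) (Ioi (-p)) :=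
    exp_neg_integrableOn_Ioi (-p) (by linarith)
  have hint : IntegrableOn (fun x : ℝ => Real.exp p * Real.exp (-(r-1) * x)) (Ioi (-p)) :=
    hint0.const_mul (Real.exp p)
  have hind : Integrable ((Ioi (-p)).indicator fun x => Real.exp p * Real.exp (-(r-1) * x)) :=
    (integrable_indicator_iff measurableSet_Ioi).mpr hint
  refine Integrable.mono' hind (gfun_cont p r).aestronglyMeasurable (ae_of_all _ fun x => ?_)
  rw [Real.norm_of_nonneg (gfun_nonneg p r x)]
  rcases le_or_gt x (-p) with hx | hx
  · rw [gfun_eq_zero p r hx]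
    exact Set.indicator_nonneg (fun y _ => by positivity) x
  · rw [Set.indicator_of_mem (mem_Ioi.mpr hx)]
    unfold gfun
    have h1 : max (Real.exp (x + p) - 1) 0 ≤ Real.exp (x + p) :=
      max_le (by linarith [Real.exp_pos (x + p)]) (Real.exp_nonneg _)
    calc max (Real.exp (x + p) - 1) 0 * Real.exp (-(r * x))
        ≤ Real.exp (x + p) * Real.exp (-(r * x)) :=
          mul_le_mul_of_nonneg_right h1 (Real.exp_nonneg _)
      _ = Real.exp p * Real.exp (-(r-1) * x) := by
          rw [← Real.exp_add, ← Real.exp_add]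
          congr 1; ring

-- Fourier integrand for gfun is integrable
lemma gfun_fourier_integrable (hr1 : 1 < r) (y : ℝ) :
    Integrable (fun x : ℝ => Complex.exp (Complex.I * y * x) * (gfun p r x : ℂ)) := by
  refine Integrable.mono' (gfun_integrable p r hr1)
    (((Complex.continuous_exp.comp ((continuous_const : Continuous fun _ : ℝ =>
        Complex.I * (y:ℂ)).mul Complex.continuous_ofReal)).mul
      (Complex.continuous_ofReal.comp (gfun_cont p r))).aestronglyMeasurable)
    (ae_of_all _ fun x => ?_)
  rw [norm_mul, Complex.norm_exp]
  have : (Complex.I * y * x).re = 0 := by simp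
  rw [this, Real.exp_zero, one_mul, Complex.norm_real, Real.norm_of_nonneg (gfun_nonneg p r x)]

lemma gfun_fourier (hr1 : 1 < r) (y : ℝ) :
    ∫ x : ℝ, Complex.exp (Complex.I * y * x) * (gfun p r x : ℂ) =
      Complex.exp (-((p : ℂ) * (Complex.I * y - r))) /
        ((Complex.I * y - r + 1) * (Complex.I * y - r)) := by
  set s : ℂ := Complex.I * y - r with hs_def
  have hs_re : s.re = -r := by simp [hs_def]
  have hs1_re : (s + 1).re = 1 - r := by simp [hs_def]; ring
  have hs_neg : s.re < 0 := by rw [hs_re]; linarith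
  have hs1_neg : (s + 1).re < 0 := by rw [hs1_re]; linarith
  have hs0 : s ≠ 0 := fun h => by rw [h] at hs_re; simp at hs_re; linarith
  have hs10 : s + 1 ≠ 0 := fun h => by
    have := congrArg Complex.re h; rw [hs1_re] at this; simp at this; linarith
  -- rewrite integrand as indicator
  have heq : ∀ x : ℝ, Complex.exp (Complex.I * y * x) * (gfun p r x : ℂ) =
      (Ioi (-p)).indicator
        (fun x : ℝ => Complex.exp (p : ℂ) * Complex.exp ((s+1) * x) - Complex.exp (s * x)) x := by
    intro x
    rcases le_or_gt x (-p) with hx | hx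
    · rw [gfun_eq_zero p r hx, Set.indicator_of_notMem (by simpa using hx)]
      simp
    · rw [Set.indicator_of_mem (mem_Ioi.mpr hx)]
      have hmax : max (Real.exp (x + p) - 1) 0 = Real.exp (x + p) - 1 := by
        rw [max_eq_left]
        have : (1:ℝ) ≤ Real.exp (x + p) := by
          rw [← Real.exp_zero]; exact Real.exp_le_exp.mpr (by linarith)
        linarith
      unfold gfun
      rw [hmax]
      push_cast
      rw [show Complex.exp (Complex.I*y*x) * ((Complex.exp ((x:ℂ)+p) - 1) *
            Complex.exp (-((r:ℂ)*x))) =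
          Complex.exp (Complex.I*y*x + ((x:ℂ)+p) + -((r:ℂ)*x)) -
            Complex.exp (Complex.I*y*x + -((r:ℂ)*x)) from by
        simp only [Complex.exp_add]; ring,
        ← Complex.exp_add]
      congr 2 <;> (simp only [hs_def]; push_cast; ring)
  rw [MeasureTheory.integral_congr_ae (ae_of_all _ heq),
    MeasureTheory.integral_indicator measurableSet_Ioi]
  rw [MeasureTheory.integral_sub (((cexp_mul_intOn (s+1) hs1_neg (-p))).const_mul _)
    (cexp_mul_intOn s hs_neg (-p)),
    MeasureTheory.integral_const_mul, cexp_mul_int _ hs1_neg, cexp_mul_int _ hs_neg]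
  have e1 : Complex.exp (p : ℂ) * Complex.exp ((s+1) * ((-p : ℝ):ℂ)) =
      Complex.exp (-((p:ℂ) * s)) := by
    rw [← Complex.exp_add]; congr 1; push_cast; ring
  have e2 : Complex.exp (s * ((-p : ℝ):ℂ)) = Complex.exp (-((p:ℂ) * s)) := by
    congr 1; push_cast; ring
  rw [e2, show Complex.exp (p:ℂ) * (-Complex.exp ((s + 1) * ((-p:ℝ):ℂ)) / (s+1)) =
      -(Complex.exp (p:ℂ) * Complex.exp ((s+1) * ((-p:ℝ):ℂ)))/(s+1) by ring, e1]
  field_simp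
  ring

end call

-- gaussian lemmas
lemma gauss_fourier_integrable (a : ℝ) (ha : 0 < a) (y : ℝ) :
    Integrable (fun x : ℝ => Complex.exp (Complex.I * y * x) * ((Real.exp (-(a * x^2)) : ℝ) : ℂ)) := by
  refine Integrable.mono' (g := fun x => Real.exp (-a * x^2)) (integrable_exp_neg_mul_sq ha)
    (((Complex.continuous_exp.comp ((continuous_const : Continuous fun _ : ℝ =>
        Complex.I * (y:ℂ)).mul Complex.continuous_ofReal)).mul
      (Complex.continuous_ofReal.comp (by fun_prop))).aestronglyMeasurable)
    (ae_of_all _ fun x => ?_)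
  rw [norm_mul, Complex.norm_exp]
  have : (Complex.I * y * x).re = 0 := by simp
  rw [this, Real.exp_zero, one_mul, Complex.norm_real,
    Real.norm_of_nonneg (Real.exp_nonneg _)]
  exact le_of_eq (by ring_nf)

lemma gauss_fourier (a : ℝ) (ha : 0 < a) (y : ℝ) :
    ∫ x : ℝ, Complex.exp (Complex.I * y * x) * ((Real.exp (-(a * x^2)) : ℝ) : ℂ) =
      ((Real.sqrt (π / a) * Real.exp (-(y^2) / (4 * a)) : ℝ) : ℂ) := by
  have h1 : ∀ x : ℝ, ((Real.exp (-(a * x^2)) : ℝ) : ℂ) = Complex.exp (-(a:ℂ) * (x:ℂ)^2) := by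
    intro x; rw [Complex.ofReal_exp]; push_cast; ring_nf
  simp_rw [h1]
  rw [fourierIntegral_gaussian (by simpa using ha) (y : ℂ)]
  have h2 : ((π : ℂ) / (a : ℂ)) ^ (1/2 : ℂ) = ((Real.sqrt (π / a) : ℝ) : ℂ) := by
    rw [← Complex.ofReal_div, Real.sqrt_eq_rpow,
      Complex.ofReal_cpow (by positivity) (1/2 : ℝ)]
    norm_num
  have h3 : -((y:ℂ))^2 / (4 * (a:ℂ)) = ((-(y^2) / (4 * a) : ℝ) : ℂ) := by push_cast; ring
  rw [h2, h3, ← Complex.ofReal_exp, ← Complex.ofReal_mul]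

-- the last-coordinate factor of the Fourier transform
lemma cfun_integrable (p r : ℝ) (hr1 : 1 < r) :
    Integrable (fun y : ℝ => Complex.exp (-((p : ℂ) * (Complex.I * y - r))) /
      ((Complex.I * y - r + 1) * (Complex.I * y - r))) := by
  have hc : (0:ℝ) < r - 1 := by linarith
  have hmeas : Continuous (fun y : ℝ => Complex.exp (-((p : ℂ) * (Complex.I * y - r))) /
      ((Complex.I * y - r + 1) * (Complex.I * y - r))) := by
    apply Continuous.div
    · exact Complex.continuous_exp.comp (by fun_prop)
    · fun_prop
    · intro y
      apply mul_ne_zero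
      · intro h
        have := congrArg Complex.re h
        simp [Complex.add_re, Complex.sub_re, Complex.mul_re] at this
        linarith
      · intro h
        have := congrArg Complex.re h
        simp [Complex.sub_re, Complex.mul_re] at this
        linarith
  have hint : Integrable (fun y : ℝ =>
      Real.exp (p * r) / (r-1)^2 * (1 + (y / (r-1))^2)⁻¹) :=
    (integrable_inv_one_add_sq.comp_div (ne_of_gt hc)).const_mul _
  refine Integrable.mono' hint hmeas.aestronglyMeasurable (ae_of_all _ fun y => ?_)
  rw [norm_div, Complex.norm_exp]
  have hre : (-((p : ℂ) * (Complex.I * y - r))).re = p * r := by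
    simp [Complex.mul_re]
  rw [hre]
  have hn1 : Real.sqrt (y^2 + (r-1)^2) ≤ ‖Complex.I * y - r + 1‖ := by
    rw [Complex.norm_def, Complex.normSq_apply]
    apply Real.sqrt_le_sqrt
    simp [Complex.add_re, Complex.sub_re, Complex.mul_re, Complex.add_im, Complex.sub_im,
      Complex.mul_im]
    nlinarith [sq_nonneg y, sq_nonneg (r-1)]
  have hn2 : Real.sqrt (y^2 + (r-1)^2) ≤ ‖Complex.I * y - r‖ := by
    rw [Complex.norm_def, Complex.normSq_apply]
    apply Real.sqrt_le_sqrt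
    simp [Complex.sub_re, Complex.mul_re, Complex.sub_im, Complex.mul_im]
    nlinarith [sq_nonneg y]
  have key : y^2 + (r-1)^2 ≤
      ‖Complex.I * y - r + 1‖ * ‖Complex.I * y - r‖ := by
    calc y^2 + (r-1)^2
        = Real.sqrt (y^2 + (r-1)^2) * Real.sqrt (y^2 + (r-1)^2) :=
          (Real.mul_self_sqrt (by positivity)).symm
      _ ≤ _ := mul_le_mul hn1 hn2 (Real.sqrt_nonneg _) (norm_nonneg _)
  have hden : (0:ℝ) < y^2 + (r-1)^2 := by positivity
  rw [show ‖(Complex.I * (y:ℂ) - r + 1) * (Complex.I * y - r)‖ =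
      ‖Complex.I * (y:ℂ) - r + 1‖ * ‖Complex.I * y - r‖ from by
    rw [norm_mul]]
  calc Real.exp (p*r) / (‖Complex.I * (y:ℂ) - r + 1‖ * ‖Complex.I * y - r‖)
      ≤ Real.exp (p*r) / (y^2 + (r-1)^2) :=
        div_le_div_of_nonneg_left (Real.exp_nonneg _) hden key
    _ = Real.exp (p * r) / (r-1)^2 * (1 + (y / (r-1))^2)⁻¹ := by
        have h1 : (1 + (y / (r-1))^2) = (y^2 + (r-1)^2) / (r-1)^2 := by
          field_simp; ring
        rw [h1]
        field_simp


set_option maxHeartbeats 4000000 in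
/-- For `j ≥ 1`, `β > 0`, positive `Δ₂, …, Δ_{j+1}` (indexed by `Fin j`), `p ∈ ℝ` and
`1 < r < 2`, the function
`H(x) = (∏_{l=2}^{j+1} exp(−β Δ_l x_{l−1}²)) · max(e^{x_{j+1}+p} − 1, 0) e^{−r x_{j+1}}`
is in `L¹(ℝ^{j+1})`, its Fourier transform (convention `Ĥ(y) = ∫ e^{i⟨y,x⟩} H(x) dx`) is
`[e^{−p(i y_{j+1} − r)}/((i y_{j+1} − r + 1)(i y_{j+1} − r))]
  ∏_{l=2}^{j+1} √(π/(β Δ_l)) exp(−y_{l−1}²/(4 β Δ_l))`, and `Ĥ ∈ L¹(ℝ^{j+1}, ℂ)`. -/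
theorem fourier_gaussian_shifted_call_product (j : ℕ) (hj : 1 ≤ j) (β : ℝ) (hβ : 0 < β)
    (Δ : Fin j → ℝ) (hΔ : ∀ i, 0 < Δ i) (p : ℝ) (r : ℝ) (hr1 : 1 < r) (hr2 : r < 2) :
    Integrable (fun x : Fin (j + 1) → ℝ =>
      (∏ i : Fin j, Real.exp (-(β * Δ i * (x i.castSucc) ^ 2))) *
        (max (Real.exp (x (Fin.last j) + p) - 1) 0 * Real.exp (-(r * x (Fin.last j))))) ∧
    (∀ y : Fin (j + 1) → ℝ,
      (∫ x : Fin (j + 1) → ℝ, Complex.exp (Complex.I * ((∑ i, y i * x i : ℝ) : ℂ)) *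
          (((∏ i : Fin j, Real.exp (-(β * Δ i * (x i.castSucc) ^ 2))) *
            (max (Real.exp (x (Fin.last j) + p) - 1) 0 *
              Real.exp (-(r * x (Fin.last j)))) : ℝ) : ℂ)) =
        (Complex.exp (-((p : ℂ) * (Complex.I * ((y (Fin.last j) : ℝ) : ℂ) - (r : ℂ)))) /
            ((Complex.I * ((y (Fin.last j) : ℝ) : ℂ) - (r : ℂ) + 1) *
              (Complex.I * ((y (Fin.last j) : ℝ) : ℂ) - (r : ℂ)))) *
          ((∏ i : Fin j, Real.sqrt (Real.pi / (β * Δ i)) *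
              Real.exp (-((y i.castSucc) ^ 2) / (4 * β * Δ i)) : ℝ) : ℂ)) ∧
    Integrable (fun y : Fin (j + 1) → ℝ =>
      (Complex.exp (-((p : ℂ) * (Complex.I * ((y (Fin.last j) : ℝ) : ℂ) - (r : ℂ)))) /
          ((Complex.I * ((y (Fin.last j) : ℝ) : ℂ) - (r : ℂ) + 1) *
            (Complex.I * ((y (Fin.last j) : ℝ) : ℂ) - (r : ℂ)))) *
        ((∏ i : Fin j, Real.sqrt (Real.pi / (β * Δ i)) *
            Real.exp (-((y i.castSucc) ^ 2) / (4 * β * Δ i)) : ℝ) : ℂ)) := by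
  classical
  set G : Fin j → ℝ → ℝ := fun l t => Real.exp (-(β * Δ l * t ^ 2)) with hG
  set h : Fin (j + 1) → ℝ → ℝ := Fin.snoc G (gfun p r) with hh
  have hcast : ∀ l : Fin j, h l.castSucc = G l := fun l => by
    simp only [hh, Fin.snoc_castSucc]
  have hlast : h (Fin.last j) = gfun p r := by simp only [hh, Fin.snoc_last]
  have hHeq : ∀ x : Fin (j + 1) → ℝ,
      (∏ i : Fin j, Real.exp (-(β * Δ i * (x i.castSucc) ^ 2))) *
        (max (Real.exp (x (Fin.last j) + p) - 1) 0 * Real.exp (-(r * x (Fin.last j)))) =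
      ∏ i : Fin (j + 1), h i (x i) := by
    intro x
    rw [Fin.prod_univ_castSucc, hlast]
    congr 1
    exact Finset.prod_congr rfl fun l _ => by rw [hcast l]
  have hhint : ∀ i, Integrable (h i) := by
    intro i
    induction i using Fin.lastCases with
    | last => rw [hlast]; exact gfun_integrable p r hr1
    | cast l =>
        rw [hcast l]
        simpa only [neg_mul] using integrable_exp_neg_mul_sq (mul_pos hβ (hΔ l))
  refine ⟨?_, ?_, ?_⟩
  · have hfe : (fun x : Fin (j + 1) → ℝ =>
        (∏ i : Fin j, Real.exp (-(β * Δ i * (x i.castSucc) ^ 2))) *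
          (max (Real.exp (x (Fin.last j) + p) - 1) 0 * Real.exp (-(r * x (Fin.last j))))) =
        fun x : Fin (j + 1) → ℝ => ∏ i : Fin (j + 1), h i (x i) := funext hHeq
    rw [hfe]
    exact Integrable.fintype_prod (𝕜 := ℝ) hhint
  · intro y
    set f : Fin (j + 1) → ℝ → ℂ :=
      fun i t => Complex.exp (Complex.I * (y i) * t) * ((h i t : ℝ) : ℂ) with hf
    have hfi : ∀ i, Integrable (f i) := by
      intro i
      induction i using Fin.lastCases with
      | last =>
          simp only [hf, hlast]
          exact gfun_fourier_integrable p r hr1 (y (Fin.last j))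
      | cast l =>
          simp only [hf, hcast l, hG]
          exact gauss_fourier_integrable _ (mul_pos hβ (hΔ l)) _
    have hsplit : ∀ x : Fin (j + 1) → ℝ,
        Complex.exp (Complex.I * ((∑ i, y i * x i : ℝ) : ℂ)) *
          (((∏ i : Fin j, Real.exp (-(β * Δ i * (x i.castSucc) ^ 2))) *
            (max (Real.exp (x (Fin.last j) + p) - 1) 0 *
              Real.exp (-(r * x (Fin.last j)))) : ℝ) : ℂ) = ∏ i, f i (x i) := by
      intro x
      have e1 : Complex.exp (Complex.I * ((∑ i, y i * x i : ℝ) : ℂ)) =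
          ∏ i, Complex.exp (Complex.I * (y i) * (x i)) := by
        rw [← Complex.exp_sum]
        congr 1
        push_cast
        rw [Finset.mul_sum]
        exact Finset.sum_congr rfl fun i _ => (mul_assoc _ _ _).symm
      rw [hHeq x, e1, Complex.ofReal_prod, ← Finset.prod_mul_distrib]
    rw [MeasureTheory.integral_congr_ae (ae_of_all _ hsplit),
      MeasureTheory.integral_fintype_prod_volume_eq_prod (ι := Fin (j + 1)) f,
      Fin.prod_univ_castSucc]
    have hGint : ∀ l : Fin j, (∫ t : ℝ, f l.castSucc t) =
        ((Real.sqrt (π / (β * Δ l)) *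
          Real.exp (-((y l.castSucc) ^ 2) / (4 * β * Δ l)) : ℝ) : ℂ) := by
      intro l
      simp only [hf, hcast l, hG]
      rw [gauss_fourier (β * Δ l) (mul_pos hβ (hΔ l)) (y l.castSucc)]
      norm_num [mul_assoc]
    have hlastint : (∫ t : ℝ, f (Fin.last j) t) =
        Complex.exp (-((p : ℂ) * (Complex.I * (y (Fin.last j)) - r))) /
          ((Complex.I * (y (Fin.last j)) - r + 1) * (Complex.I * (y (Fin.last j)) - r)) := by
      simp only [hf, hlast]
      exact gfun_fourier p r hr1 _
    rw [Finset.prod_congr rfl fun l _ => hGint l, hlastint, mul_comm, Complex.ofReal_prod]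
  · set k : Fin (j + 1) → ℝ → ℂ :=
      Fin.snoc (fun l t => ((Real.sqrt (π / (β * Δ l)) *
          Real.exp (-(t ^ 2) / (4 * β * Δ l)) : ℝ) : ℂ))
        (fun t => Complex.exp (-((p : ℂ) * (Complex.I * t - r))) /
          ((Complex.I * t - r + 1) * (Complex.I * t - r))) with hk
    have hki : ∀ i, Integrable (k i) := by
      intro i
      induction i using Fin.lastCases with
      | last =>
          simp only [hk, Fin.snoc_last]
          exact cfun_integrable p r hr1
      | cast l =>
          simp only [hk, Fin.snoc_castSucc]
          have hΔl := hΔ l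
          have hpos : (0:ℝ) < 1 / (4 * β * Δ l) := by positivity
          have hbase : Integrable (fun t : ℝ => Real.sqrt (π / (β * Δ l)) *
              Real.exp (-(1 / (4 * β * Δ l)) * t ^ 2)) :=
            (integrable_exp_neg_mul_sq hpos).const_mul _
          have hfe : (fun t : ℝ => Real.sqrt (π / (β * Δ l)) *
              Real.exp (-(t ^ 2) / (4 * β * Δ l))) =
              fun t : ℝ => Real.sqrt (π / (β * Δ l)) *
                Real.exp (-(1 / (4 * β * Δ l)) * t ^ 2) := by
            funext t; congr 1; ring_nf
          have h2 : Integrable (fun t : ℝ => Real.sqrt (π / (β * Δ l)) *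
              Real.exp (-(t ^ 2) / (4 * β * Δ l))) := by
            rw [hfe]; exact hbase
          exact h2.ofReal
    have hfe : (fun y : Fin (j + 1) → ℝ =>
        (Complex.exp (-((p : ℂ) * (Complex.I * ((y (Fin.last j) : ℝ) : ℂ) - (r : ℂ)))) /
            ((Complex.I * ((y (Fin.last j) : ℝ) : ℂ) - (r : ℂ) + 1) *
              (Complex.I * ((y (Fin.last j) : ℝ) : ℂ) - (r : ℂ)))) *
          ((∏ i : Fin j, Real.sqrt (Real.pi / (β * Δ i)) *
              Real.exp (-((y i.castSucc) ^ 2) / (4 * β * Δ i)) : ℝ) : ℂ)) =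
        fun y : Fin (j + 1) → ℝ => ∏ i : Fin (j + 1), k i (y i) := by
      funext y
      rw [Fin.prod_univ_castSucc]
      simp only [hk, Fin.snoc_castSucc, Fin.snoc_last]
      rw [mul_comm, Complex.ofReal_prod]
    rw [hfe]
    exact Integrable.fintype_prod (𝕜 := ℂ) hki
end

section
/- Let (Ω, 𝓕, P) be a probability space, K ≥ 2 an integer, and D₁, …, D_{K−1}, D_T real-valued random variables. Let β ≥ 0, C ≥ 0, L > 0, Δ₂, …, Δ_K > 0 be constants, and let ε ≥ 0 satisfy P(⋃_{i=1}^{K−1} {|Dᵢ| > L}) ≤ ε. Assume E[(e^{D_T} − 1)²] < ∞ and set C₂ := E[(e^{D_T} − 1)²]^{1/2}. Define W₁(x) = βx² + C for all x ∈ ℝ, and W₂(x) = βL² + C for x > L, W₂(x) = βx² + C for −L ≤ x ≤ L, and W₂(x) = (βL² + C)e^{L+x} for x < −L. Then | E[(∏_{l=2}^{K} exp(−W₂(D_{l−1}) Δ_l)) · max(e^{D_T} − 1, 0)] − E[(∏_{l=2}^{K} exp(−W₁(D_{l−1}) Δ_l)) · max(e^{D_T} − 1, 0)] | ≤ 2 C₂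 ε^{1/2}. -/
open MeasureTheory Real

/-- Proposition A.2, part (2) (abstract form): with the call-type payoff factor
`max(e^{D_T} − 1, 0)` included, replacing `W₁(x) = βx² + C` by its bounded modification
`W₂` changes the expectation by at most `2 C₂ √ε`, where
`C₂ = E[(e^{D_T} − 1)²]^{1/2}`. -/
theorem bounded_intensity_approx_call
    {Ω : Type*} [MeasurableSpace Ω] (P : Measure Ω) [IsProbabilityMeasure P]
    (K : ℕ) (hK : 2 ≤ K) (D : Fin (K - 1) → Ω → ℝ) (hD : ∀ i, Measurable (D i))
    (DT : Ω → ℝ) (hDT : Measurable DT)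
    (β C L : ℝ) (hβ : 0 ≤ β) (hC : 0 ≤ C) (hL : 0 < L)
    (Δ : Fin (K - 1) → ℝ) (hΔ : ∀ i, 0 < Δ i)
    (ε : ℝ) (hε : 0 ≤ ε)
    (hP : P (⋃ i, {ω | |D i ω| > L}) ≤ ENNReal.ofReal ε)
    (hInt : Integrable (fun ω => (Real.exp (DT ω) - 1) ^ 2) P)
    (W₁ W₂ : ℝ → ℝ)
    (hW₁ : ∀ x, W₁ x = β * x ^ 2 + C)
    (hW₂a : ∀ x, L < x → W₂ x = β * L ^ 2 + C)
    (hW₂b : ∀ x, -L ≤ x → x ≤ L → W₂ x = β * x ^ 2 + C)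
    (hW₂c : ∀ x, x < -L → W₂ x = (β * L ^ 2 + C) * Real.exp (L + x)) :
    |(∫ ω, (∏ i, Real.exp (-(W₂ (D i ω) * Δ i))) * max (Real.exp (DT ω) - 1) 0 ∂P) -
        ∫ ω, (∏ i, Real.exp (-(W₁ (D i ω) * Δ i))) * max (Real.exp (DT ω) - 1) 0 ∂P| ≤
      2 * Real.sqrt (∫ ω, (Real.exp (DT ω) - 1) ^ 2 ∂P) * Real.sqrt ε := by
  set h : Ω → ℝ := fun ω => Real.exp (DT ω) - 1 with hh
  set A : Set Ω := ⋃ i, {ω | |D i ω| > L} with hA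
  have hmeasA : MeasurableSet A := by
    refine MeasurableSet.iUnion fun i => ?_
    exact measurableSet_lt measurable_const (hD i).abs
  -- W₂ as an explicit piecewise function, hence measurable
  have hW₂eq : W₂ = fun x => if x < -L then (β * L ^ 2 + C) * Real.exp (L + x)
      else if x ≤ L then β * x ^ 2 + C else β * L ^ 2 + C := by
    funext x
    by_cases h1 : x < -L
    · simp [h1, hW₂c x h1]
    · by_cases h2 : x ≤ L
      · simp [h1, h2, hW₂b x (not_lt.mp h1) h2]
      · simp [h1, h2, hW₂a x (not_le.mp h2)]
  have hW₂meas : Measurable W₂ := by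
    rw [hW₂eq]
    refine Measurable.ite (measurableSet_lt measurable_id measurable_const) ?_ ?_
    · exact measurable_const.mul (Real.measurable_exp.comp (measurable_const.add measurable_id))
    · refine Measurable.ite (measurableSet_le measurable_id measurable_const) ?_ measurable_const
      exact ((measurable_id.pow_const 2).const_mul β).add_const C
  have hW₁0 : ∀ x, 0 ≤ W₁ x := fun x => by
    rw [hW₁]; positivity
  have hW₂0 : ∀ x, 0 ≤ W₂ x := fun x => by
    rw [hW₂eq]
    have h1 : (0:ℝ) ≤ β * L ^ 2 + C := by positivity
    dsimp only
    split_ifs with ha hb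
    · positivity
    · positivity
    · exact h1
  set F₂ : Ω → ℝ := fun ω => ∏ i, Real.exp (-(W₂ (D i ω) * Δ i)) with hF₂
  set F₁ : Ω → ℝ := fun ω => ∏ i, Real.exp (-(W₁ (D i ω) * Δ i)) with hF₁
  have hF₂0 : ∀ ω, 0 ≤ F₂ ω := fun ω =>
    Finset.prod_nonneg fun i _ => (Real.exp_pos _).le
  have hF₁0 : ∀ ω, 0 ≤ F₁ ω := fun ω =>
    Finset.prod_nonneg fun i _ => (Real.exp_pos _).le
  have hF₂1 : ∀ ω, F₂ ω ≤ 1 := fun ω => by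
    refine Finset.prod_le_one (fun i _ => (Real.exp_pos _).le) fun i _ => ?_
    rw [Real.exp_le_one_iff, neg_nonpos]
    exact mul_nonneg (hW₂0 _) (hΔ i).le
  have hF₁1 : ∀ ω, F₁ ω ≤ 1 := fun ω => by
    refine Finset.prod_le_one (fun i _ => (Real.exp_pos _).le) fun i _ => ?_
    rw [Real.exp_le_one_iff, neg_nonpos]
    exact mul_nonneg (hW₁0 _) (hΔ i).le
  have hW₁meas : Measurable W₁ := by
    have : W₁ = fun x => β * x ^ 2 + C := funext hW₁
    rw [this]
    exact ((measurable_id.pow_const 2).const_mul β).add_const C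
  have hmeash : Measurable h := (Real.measurable_exp.comp hDT).sub_const 1
  have hmeasmax : Measurable (fun ω => max (h ω) 0) := hmeash.max measurable_const
  have hmeasF₂ : Measurable F₂ := by
    refine Finset.measurable_prod _ fun i _ => ?_
    exact Real.measurable_exp.comp (((hW₂meas.comp (hD i)).mul_const (Δ i)).neg)
  have hmeasF₁ : Measurable F₁ := by
    refine Finset.measurable_prod _ fun i _ => ?_
    exact Real.measurable_exp.comp (((hW₁meas.comp (hD i)).mul_const (Δ i)).neg)
  -- integrability of h
  have hIntH : Integrable h P := by
    refine (hInt.add (integrable_const 1)).mono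
      hmeash.aestronglyMeasurable (ae_of_all _ fun ω => ?_)
    simp only [Real.norm_eq_abs, Pi.add_apply]
    have h1 : |h ω| * 2 ≤ h ω ^ 2 + 1 := by nlinarith [sq_nonneg (|h ω| - 1), sq_abs (h ω)]
    have h2 : h ω ^ 2 + 1 ≤ |h ω ^ 2 + 1| := le_abs_self _
    nlinarith [abs_nonneg (h ω)]
  -- integrability of the two integrands
  have key : ∀ (F : Ω → ℝ), Measurable F → (∀ ω, 0 ≤ F ω) → (∀ ω, F ω ≤ 1) →
      Integrable (fun ω => F ω * max (h ω) 0) P := by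
    intro F hFm hF0 hF1
    refine hIntH.mono (hFm.mul hmeasmax).aestronglyMeasurable (ae_of_all _ fun ω => ?_)
    simp only [Real.norm_eq_abs]
    rw [abs_of_nonneg (mul_nonneg (hF0 ω) (le_max_right _ _))]
    calc F ω * max (h ω) 0 ≤ 1 * max (h ω) 0 :=
          mul_le_mul_of_nonneg_right (hF1 ω) (le_max_right _ _)
      _ = max (h ω) 0 := one_mul _
      _ ≤ |h ω| := max_le (le_abs_self _) (abs_nonneg _)
  have hInt₂ := key F₂ hmeasF₂ hF₂0 hF₂1
  have hInt₁ := key F₁ hmeasF₁ hF₁0 hF₁1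
  -- pointwise bound
  have hpt : ∀ ω, |F₂ ω * max (h ω) 0 - F₁ ω * max (h ω) 0| ≤
      2 * A.indicator (fun ω => |h ω|) ω := by
    intro ω
    by_cases hωA : ω ∈ A
    · rw [Set.indicator_of_mem hωA]
      have hm : max (h ω) 0 ≤ |h ω| := max_le (le_abs_self _) (abs_nonneg _)
      have h2 : |F₂ ω * max (h ω) 0| ≤ |h ω| := by
        rw [abs_of_nonneg (mul_nonneg (hF₂0 ω) (le_max_right _ _))]
        calc F₂ ω * max (h ω) 0 ≤ 1 * max (h ω) 0 :=
              mul_le_mul_of_nonneg_right (hF₂1 ω) (le_max_right _ _)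
          _ ≤ |h ω| := by rw [one_mul]; exact hm
      have h1 : |F₁ ω * max (h ω) 0| ≤ |h ω| := by
        rw [abs_of_nonneg (mul_nonneg (hF₁0 ω) (le_max_right _ _))]
        calc F₁ ω * max (h ω) 0 ≤ 1 * max (h ω) 0 :=
              mul_le_mul_of_nonneg_right (hF₁1 ω) (le_max_right _ _)
          _ ≤ |h ω| := by rw [one_mul]; exact hm
      calc |F₂ ω * max (h ω) 0 - F₁ ω * max (h ω) 0| ≤
            |F₂ ω * max (h ω) 0| + |F₁ ω * max (h ω) 0| := abs_sub _ _
        _ ≤ |h ω| + |h ω| := add_le_add h2 h1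
        _ = 2 * |h ω| := by ring
    · have hall : ∀ i, |D i ω| ≤ L := by
        intro i
        by_contra hcon
        exact hωA (Set.mem_iUnion.mpr ⟨i, not_le.mp hcon⟩)
      have : F₂ ω = F₁ ω := by
        refine Finset.prod_congr rfl fun i _ => ?_
        have := abs_le.mp (hall i)
        rw [hW₂b _ this.1 this.2, hW₁]
      rw [this, sub_self, abs_zero, Set.indicator_of_notMem hωA]
      norm_num
  -- Cauchy–Schwarz
  have hMemh : MemLp h 2 P := (memLp_two_iff_integrable_sq hmeash.aestronglyMeasurable).mpr hInt
  have hMemInd : MemLp (A.indicator fun _ => (1:ℝ)) (ENNReal.ofReal 2) P := by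
    rw [show ENNReal.ofReal 2 = 2 by norm_num]
    exact memLp_indicator_const 2 hmeasA 1 (Or.inr (measure_ne_top P A))
  have hMemAbs : MemLp (fun ω => |h ω|) (ENNReal.ofReal 2) P := by
    rw [show ENNReal.ofReal 2 = 2 by norm_num]
    simpa [Real.norm_eq_abs] using hMemh.norm
  have hCS : ∫ ω, A.indicator (fun ω => |h ω|) ω ∂P ≤
      Real.sqrt ((P A).toReal) * Real.sqrt (∫ ω, h ω ^ 2 ∂P) := by
    have hconj : (2:ℝ).HolderConjugate 2 := Real.HolderConjugate.two_two
    have hrw : ∀ ω, A.indicator (fun ω => |h ω|) ω =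
        (A.indicator (fun _ => (1:ℝ)) ω) * |h ω| := by
      intro ω
      by_cases hωA : ω ∈ A <;>
        simp [Set.indicator_of_mem, Set.indicator_of_notMem, hωA]
    calc ∫ ω, A.indicator (fun ω => |h ω|) ω ∂P
        = ∫ ω, (A.indicator (fun _ => (1:ℝ)) ω) * |h ω| ∂P := by
          exact integral_congr_ae (ae_of_all _ hrw)
      _ ≤ (∫ ω, (A.indicator (fun _ => (1:ℝ)) ω) ^ (2:ℝ) ∂P) ^ ((1:ℝ)/2) *
            (∫ ω, |h ω| ^ (2:ℝ) ∂P) ^ ((1:ℝ)/2) := by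
          refine integral_mul_le_Lp_mul_Lq_of_nonneg hconj
            (ae_of_all _ fun ω => ?_) (ae_of_all _ fun ω => abs_nonneg _) hMemInd hMemAbs
          exact Set.indicator_nonneg (fun _ _ => zero_le_one) ω
      _ = Real.sqrt ((P A).toReal) * Real.sqrt (∫ ω, h ω ^ 2 ∂P) := by
          have h1 : ∀ ω, (A.indicator (fun _ => (1:ℝ)) ω) ^ (2:ℝ) =
              A.indicator (fun _ => (1:ℝ)) ω := by
            intro ω
            by_cases hωA : ω ∈ A
            · simp [Set.indicator_of_mem hωA]
            · simp [Set.indicator_of_notMem hωA,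
                Real.zero_rpow (by norm_num : (2:ℝ) ≠ 0)]
          have h2 : ∀ ω, |h ω| ^ (2:ℝ) = h ω ^ 2 := by
            intro ω
            rw [show (2:ℝ) = ((2:ℕ):ℝ) by norm_num, Real.rpow_natCast, sq_abs]
          rw [integral_congr_ae (ae_of_all _ h1), integral_congr_ae (ae_of_all _ h2),
            integral_indicator_const _ hmeasA]
          simp [Real.sqrt_eq_rpow, measureReal_def]
  -- putting everything together
  have hIntInd : Integrable (fun ω => 2 * A.indicator (fun ω => |h ω|) ω) P :=
    ((hIntH.abs.indicator hmeasA).const_mul 2)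
  calc |(∫ ω, F₂ ω * max (h ω) 0 ∂P) - ∫ ω, F₁ ω * max (h ω) 0 ∂P|
      = |∫ ω, (F₂ ω * max (h ω) 0 - F₁ ω * max (h ω) 0) ∂P| := by
        rw [integral_sub hInt₂ hInt₁]
    _ ≤ ∫ ω, |F₂ ω * max (h ω) 0 - F₁ ω * max (h ω) 0| ∂P := by
        simpa [Real.norm_eq_abs] using
          norm_integral_le_integral_norm (μ := P)
            (fun ω => F₂ ω * max (h ω) 0 - F₁ ω * max (h ω) 0)
    _ ≤ ∫ ω, 2 * A.indicator (fun ω => |h ω|) ω ∂P := by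
        refine integral_mono (hInt₂.sub hInt₁).abs hIntInd hpt
    _ = 2 * ∫ ω, A.indicator (fun ω => |h ω|) ω ∂P := integral_const_mul 2 _
    _ ≤ 2 * (Real.sqrt ((P A).toReal) * Real.sqrt (∫ ω, h ω ^ 2 ∂P)) := by
        linarith [hCS]
    _ ≤ 2 * Real.sqrt (∫ ω, h ω ^ 2 ∂P) * Real.sqrt ε := by
        have hPA : (P A).toReal ≤ ε := ENNReal.toReal_le_of_le_ofReal hε hP
        have : Real.sqrt ((P A).toReal) ≤ Real.sqrt ε := Real.sqrt_le_sqrt hPA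
        have hs : 0 ≤ Real.sqrt (∫ ω, h ω ^ 2 ∂P) := Real.sqrt_nonneg _
        nlinarith [Real.sqrt_nonneg ((P A).toReal)]
end
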